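/- Let G be a diregular (2,k,+2)-digraph with k ≥ 3 and let u, v have a unique common out-neighbour. Then N²(u) ≠ N²(v), i.e. the sets of vertices at distance exactly 2 from u and from v are different. -/

import Mathlib

open scoped Classical

/-- There is a directed walk of length `n` from `u` to `v` in the digraph with
arc relation `A` (the walk is recorded as its list of `n+1` vertices). -/
def HasWalkLen {V : Type*} (A : V → V → Prop) (n : ℕ) (u v : V) : Prop :=
  ∃ l : List V, l.head? = some u ∧ l.getLast? = some v ∧ l.Chain' A ∧ l.length = n + 1

/-- The distance from `u` to `v` is at most `n`. -/
def DistLe {V : Type*} (A : V → V → Prop) (n : ℕ) (u v : V) : Prop :=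
  ∃ m ≤ n, HasWalkLen A m u v

/-- The distance from `u` to `v` is exactly `n`. -/
def DistEq {V : Type*} (A : V → V → Prop) (n : ℕ) (u v : V) : Prop :=
  HasWalkLen A n u v ∧ ∀ m < n, ¬ HasWalkLen A m u v

/-- A digraph is `k`-geodetic: between any ordered pair of vertices there is at
most one directed path of length at most `k`. -/
def Geodetic {V : Type*} (A : V → V → Prop) (k : ℕ) : Prop :=
  ∀ u v : V, ∀ l₁ l₂ : List V,
    (l₁.head? = some u ∧ l₁.getLast? = some v ∧ l₁.Chain' A ∧ l₁.length ≤ k + 1) →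
    (l₂.head? = some u ∧ l₂.getLast? = some v ∧ l₂.Chain' A ∧ l₂.length ≤ k + 1) →
    l₁ = l₂

/-- Out-neighbourhood. -/
def Nplus {V : Type*} (A : V → V → Prop) (u : V) : Set V := {v | A u v}

/-- Out-degree. -/
noncomputable def outDeg {V : Type*} (A : V → V → Prop) (u : V) : ℕ := {v | A u v}.ncard

/-- In-degree. -/
noncomputable def inDeg {V : Type*} (A : V → V → Prop) (u : V) : ℕ := {v | A v u}.ncard

/-- `T_k(u)`: the set of vertices at distance at most `k` from `u`. -/
def Tset {V : Type*} (A : V → V → Prop) (k : ℕ) (u : V) : Set V := {v | DistLe A k u v}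

/-- `O(u)`: the outliers of `u`, i.e. vertices at distance at least `k+1` from `u`. -/
def Outliers {V : Type*} (A : V → V → Prop) (k : ℕ) (u : V) : Set V := {v | ¬ DistLe A k u v}

/-!
Suppose `N²(u) = N²(v)`. Each out-neighbour of `u₁` lies in `N²(u)`, hence in `N²(v)`, and
`k`-geodecity forces the path from `v` through `v₁`; so `u₁` and `v₁` have the same two
out-neighbours, and their in-neighbours are exactly `u₁` and `v₁`. Two out-neighbours of a common
vertex are at distance at least `k` from each other, so these two vertices are at distance
greater than `k` from `u₂`. By the Moore bound every vertex has at most two outliers, hence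
`O(u₂) = N⁺(u₁)`, and every in-neighbour of a vertex of `O(u₂)` has all its out-neighbours in
`O(u₂)`.

This is impossible. Let `a` be an out-neighbour of `u₂`, `T` the other in-neighbour of `a` and
`g` the other out-neighbour of `T`. In a `k`-geodetic digraph of out-degree two, `T` or `g` is an
outlier of `u₂`. If `T` is, then `u → u₁ → T → a` and `u → u₂ → a` are two walks of length at
most `k`; if `g` is, then `a` is an outlier of `u₂` although `u₂ → a`.
-/

section Walks

variable {V : Type*} {A : V → V → Prop} {m n : ℕ} {x y z : V}

theorem hasWalkLen_zero_iff : HasWalkLen A 0 x y ↔ x = y := by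
  constructor
  · rintro ⟨_ | ⟨a, _ | _⟩, h₁, h₂, -, hl⟩ <;> simp_all
  · rintro rfl
    exact ⟨[x], rfl, rfl, List.isChain_singleton x, rfl⟩

theorem hasWalkLen_succ_iff :
    HasWalkLen A (n + 1) x z ↔ ∃ y, A x y ∧ HasWalkLen A n y z := by
  constructor
  · rintro ⟨_ | ⟨a, _ | ⟨b, l⟩⟩, h₁, h₂, h₃, hl⟩
    · simp at hl
    · simp at hl
    · obtain rfl : a = x := by simpa using h₁
      obtain ⟨hab, h₃⟩ := List.isChain_cons_cons.1 h₃
      exact ⟨b, hab, b :: l, rfl, by simpa using h₂, h₃, by simpa using hl⟩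
  · rintro ⟨y, hxy, _ | ⟨b, l⟩, h₁, h₂, h₃, hl⟩
    · simp at h₁
    · obtain rfl : b = y := by simpa using h₁
      refine ⟨x :: b :: l, rfl, by simpa using h₂, List.isChain_cons_cons.2 ⟨hxy, h₃⟩,
        by simpa using hl⟩

theorem hasWalkLen_one_iff : HasWalkLen A 1 x y ↔ A x y := by
  simp [hasWalkLen_succ_iff, hasWalkLen_zero_iff]

theorem HasWalkLen.cons (h : A x y) (w : HasWalkLen A n y z) : HasWalkLen A (n + 1) x z :=
  hasWalkLen_succ_iff.2 ⟨y, h, w⟩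

theorem hasWalkLen_succ_iff' :
    HasWalkLen A (n + 1) x z ↔ ∃ y, HasWalkLen A n x y ∧ A y z := by
  induction n generalizing x with
  | zero => simp [hasWalkLen_succ_iff, hasWalkLen_zero_iff]
  | succ n ih =>
    rw [hasWalkLen_succ_iff]
    constructor
    · rintro ⟨y, hxy, w⟩
      obtain ⟨p, wp, hpz⟩ := ih.1 w
      exact ⟨p, wp.cons hxy, hpz⟩
    · rintro ⟨p, wp, hpz⟩
      obtain ⟨y, hxy, w⟩ := hasWalkLen_succ_iff.1 wp
      exact ⟨y, hxy, ih.2 ⟨p, w, hpz⟩⟩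

theorem HasWalkLen.snoc (w : HasWalkLen A n x y) (h : A y z) : HasWalkLen A (n + 1) x z :=
  hasWalkLen_succ_iff'.2 ⟨y, w, h⟩

theorem HasWalkLen.distLe (w : HasWalkLen A m x y) (h : m ≤ n) : DistLe A n x y :=
  ⟨m, h, w⟩

end Walks

namespace Geodetic

variable {V : Type*} {A : V → V → Prop} {k m m' : ℕ} {x y z y₁ y₂ : V}

theorem length_eq (hgeo : Geodetic A k) (hm : m ≤ k) (hm' : m' ≤ k)
    (w : HasWalkLen A m x y) (w' : HasWalkLen A m' x y) : m = m' := by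
  obtain ⟨l, h₁, h₂, h₃, hl⟩ := w
  obtain ⟨l', h₁', h₂', h₃', hl'⟩ := w'
  obtain rfl := hgeo x y l l' ⟨h₁, h₂, h₃, by omega⟩ ⟨h₁', h₂', h₃', by omega⟩
  omega

theorem distEq_of_hasWalkLen (hgeo : Geodetic A k) (hm : m ≤ k) (w : HasWalkLen A m x y) :
    DistEq A m x y :=
  ⟨w, fun _ hm' w' => hm'.ne (hgeo.length_eq (by omega) hm w' w)⟩

theorem not_hasWalkLen_self (hgeo : Geodetic A k) (hm : 0 < m) (hmk : m ≤ k) :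
    ¬ HasWalkLen A m x x :=
  fun w => hm.ne' (hgeo.length_eq hmk k.zero_le w (hasWalkLen_zero_iff.2 rfl))

theorem eq_of_arc_of_hasWalkLen (hgeo : Geodetic A k) (hm : m + 1 ≤ k) (h₁ : A x y₁)
    (h₂ : A x y₂) (w₁ : HasWalkLen A m y₁ z) (w₂ : HasWalkLen A m y₂ z) : y₁ = y₂ := by
  obtain ⟨_ | ⟨b₁, l₁⟩, e₁, f₁, c₁, n₁⟩ := w₁
  · simp at e₁
  obtain ⟨_ | ⟨b₂, l₂⟩, e₂, f₂, c₂, n₂⟩ := w₂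
  · simp at e₂
  obtain rfl : b₁ = y₁ := by simpa using e₁
  obtain rfl : b₂ = y₂ := by simpa using e₂
  have h := hgeo x z (x :: b₁ :: l₁) (x :: b₂ :: l₂)
    ⟨rfl, by simpa using f₁, List.isChain_cons_cons.2 ⟨h₁, c₁⟩, by simp at n₁ ⊢; omega⟩
    ⟨rfl, by simpa using f₂, List.isChain_cons_cons.2 ⟨h₂, c₂⟩, by simp at n₂ ⊢; omega⟩
  simp only [List.cons.injEq] at h
  exact h.2.1

theorem eq_of_hasWalkLen_of_arc (hgeo : Geodetic A k) (hm : m + 1 ≤ k)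
    (w₁ : HasWalkLen A m x y₁) (w₂ : HasWalkLen A m x y₂) (h₁ : A y₁ z) (h₂ : A y₂ z) :
    y₁ = y₂ := by
  induction m generalizing x with
  | zero => rw [← hasWalkLen_zero_iff.1 w₁, ← hasWalkLen_zero_iff.1 w₂]
  | succ m ih =>
    obtain ⟨s₁, hx₁, w₁⟩ := hasWalkLen_succ_iff.1 w₁
    obtain ⟨s₂, hx₂, w₂⟩ := hasWalkLen_succ_iff.1 w₂
    obtain rfl := hgeo.eq_of_arc_of_hasWalkLen hm hx₁ hx₂ (w₁.snoc h₁) (w₂.snoc h₂)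
    exact ih (by omega) w₁ w₂

theorem not_distLe_of_common_inNeighbour (hgeo : Geodetic A k) (h₁ : A x y₁) (h₂ : A x y₂)
    (hne : y₁ ≠ y₂) : ¬ DistLe A (k - 1) y₁ y₂ := by
  rintro ⟨_ | m, hm, w⟩
  · exact hne (hasWalkLen_zero_iff.1 w)
  · have := hgeo.length_eq (by omega) (by omega) (w.cons h₁) (hasWalkLen_one_iff.2 h₂)
    omega

theorem not_distLe_of_common_outNeighbour (hgeo : Geodetic A k) (h₁ : A y₁ z) (h₂ : A y₂ z)
    (hne : y₁ ≠ y₂) : ¬ DistLe A (k - 1) y₁ y₂ := by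
  rintro ⟨_ | m, hm, w⟩
  · exact hne (hasWalkLen_zero_iff.1 w)
  · have := hgeo.length_eq (by omega) (by omega) (w.snoc h₂) (hasWalkLen_one_iff.2 h₁)
    omega

end Geodetic

theorem not_distLe_succ {V : Type*} {A : V → V → Prop} {n : ℕ} {x y : V} (hy : y ≠ x)
    (h : ∀ w, A w y → ¬ DistLe A n x w) : ¬ DistLe A (n + 1) x y := by
  rintro ⟨_ | m, hm, w⟩
  · exact hy (hasWalkLen_zero_iff.1 w).symm
  · obtain ⟨p, wp, hpy⟩ := hasWalkLen_succ_iff'.1 w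
    exact h p hpy ⟨m, by omega, wp⟩

section MooreBound

open Finset

variable {V : Type*} [Fintype V] {A : V → V → Prop} {k d i : ℕ} {x : V}

noncomputable def walkLayer (A : V → V → Prop) (x : V) (i : ℕ) : Finset V :=
  univ.filter (HasWalkLen A i x)

theorem Geodetic.mul_card_walkLayer_le (hgeo : Geodetic A k) (hout : ∀ w, outDeg A w = d)
    (hi : i + 1 ≤ k) : d * #(walkLayer A x i) ≤ #(walkLayer A x (i + 1)) := by
  have hcard (w : V) : #(univ.filter (A w)) = d := by
    rw [← hout w, outDeg, Set.ncard_eq_toFinset_card', Set.toFinset_ofPred]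
  have hdisj : ((walkLayer A x i : Set V)).PairwiseDisjoint (fun w => univ.filter (A w)) := by
    intro w₁ hw₁ w₂ hw₂ hne
    simp only [Function.onFun, disjoint_left, mem_filter, mem_univ, true_and]
    intro y hy₁ hy₂
    simp only [walkLayer, coe_filter, mem_univ, true_and, Set.mem_ofPred_eq] at hw₁ hw₂
    exact hne (hgeo.eq_of_hasWalkLen_of_arc hi hw₁ hw₂ hy₁ hy₂)
  calc d * #(walkLayer A x i) = #((walkLayer A x i).biUnion fun w => univ.filter (A w)) := by
        rw [card_biUnion hdisj, sum_const_nat fun w _ => hcard w, mul_comm]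
    _ ≤ #(walkLayer A x (i + 1)) := by
        refine card_le_card fun y hy => ?_
        simp only [walkLayer, mem_biUnion, mem_filter, mem_univ, true_and] at hy ⊢
        obtain ⟨w, hw, hwy⟩ := hy
        exact hw.snoc hwy

theorem Geodetic.pow_le_card_walkLayer (hgeo : Geodetic A k) (hout : ∀ w, outDeg A w = d)
    (x : V) : ∀ i ≤ k, d ^ i ≤ #(walkLayer A x i)
  | 0, _ => card_pos.2 ⟨x, by simpa [walkLayer] using hasWalkLen_zero_iff.2 rfl⟩
  | i + 1, hi => by
    rw [pow_succ']
    exact (Nat.mul_le_mul_left d (hgeo.pow_le_card_walkLayer hout x i (by omega))).trans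
      (hgeo.mul_card_walkLayer_le hout hi)

theorem Geodetic.sum_pow_le_ncard_tset (hgeo : Geodetic A k) (hout : ∀ w, outDeg A w = d)
    (x : V) : ∑ i ∈ range (k + 1), d ^ i ≤ (Tset A k x).ncard := by
  have hdisj : ((range (k + 1) : Set ℕ)).PairwiseDisjoint (walkLayer A x) := by
    intro i hi j hj hne
    simp only [Function.onFun, disjoint_left, walkLayer, mem_filter, mem_univ, true_and]
    intro y hyi hyj
    simp only [coe_range, Set.mem_Iio] at hi hj
    exact hne (hgeo.length_eq (by omega) (by omega) hyi hyj)
  calc ∑ i ∈ range (k + 1), d ^ i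
      ≤ ∑ i ∈ range (k + 1), #(walkLayer A x i) :=
        sum_le_sum fun i hi => hgeo.pow_le_card_walkLayer hout x i (by simp at hi; omega)
    _ = #((range (k + 1)).biUnion (walkLayer A x)) := (card_biUnion hdisj).symm
    _ ≤ #(univ.filter (DistLe A k x)) := by
        refine card_le_card fun y hy => ?_
        simp only [walkLayer, mem_biUnion, mem_range, mem_filter, mem_univ, true_and] at hy ⊢
        obtain ⟨i, hi, w⟩ := hy
        exact w.distLe (by omega)
    _ = (Tset A k x).ncard := by
        rw [Tset, Set.ncard_eq_toFinset_card', Set.toFinset_ofPred]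

theorem Geodetic.ncard_outliers_le_two (hgeo : Geodetic A k) (hout : ∀ w, outDeg A w = 2)
    (hcard : Fintype.card V = 2 ^ (k + 1) + 1) (x : V) : (Outliers A k x).ncard ≤ 2 := by
  have hT := hgeo.sum_pow_le_ncard_tset hout x
  rw [Nat.geomSum_eq le_rfl, Nat.div_one] at hT
  have hsum := Set.ncard_add_ncard_compl (Tset A k x)
  rw [Nat.card_eq_fintype_card, hcard] at hsum
  have hO : (Tset A k x)ᶜ = Outliers A k x := rfl
  rw [hO] at hsum
  have := Nat.one_le_two_pow (n := k + 1)
  omega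

end MooreBound

theorem Set.eq_pair_of_ncard_eq_two {α : Type*} {s : Set α} {a b : α} (hs : s.ncard = 2)
    (ha : a ∈ s) (hb : b ∈ s) (hab : a ≠ b) : s = {a, b} :=
  (Set.eq_of_subset_of_ncard_le (Set.pair_subset ha hb) (by rw [hs, Set.ncard_pair hab])
    (Set.finite_of_ncard_ne_zero (by omega))).symm

namespace Geodetic

variable {V : Type*} {A : V → V → Prop} {k : ℕ} {x y a b T g u u₁ u₂ v v₁ : V}

theorem hasWalkLen_pred_of_distLe (hgeo : Geodetic A k) (hk : 1 ≤ k) (hxa : A x a)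
    (hx : Nplus A x ⊆ {a, b}) (hTa : A T a) (hTx : T ≠ x) (hT : DistLe A k x T) :
    HasWalkLen A (k - 1) b T := by
  obtain ⟨m, hm, w⟩ := hT
  obtain rfl : m = k := by
    by_contra hne
    exact hgeo.not_distLe_of_common_outNeighbour hxa hTa hTx.symm (w.distLe (by omega))
  rw [← Nat.sub_add_cancel hk] at w
  obtain ⟨s, hxs, ws⟩ := hasWalkLen_succ_iff.1 w
  rcases hx hxs with rfl | rfl
  · exact absurd (ws.snoc hTa) (hgeo.not_hasWalkLen_self (by omega) (by omega))
  · exact ws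

/- If neither is an outlier, a shortest walk from `x` to `T` has length exactly `k` and passes
through `b`; a shortest walk from `x` to `g` then gives a second short walk to `g` from `T` or
from `b`. -/
theorem mem_outliers_or_mem_outliers (hgeo : Geodetic A k) (hk : 2 ≤ k) (hxa : A x a)
    (hx : Nplus A x ⊆ {a, b}) (hTa : A T a) (hTg : A T g) (hag : a ≠ g)
    (hTx : T ≠ x) : T ∈ Outliers A k x ∨ g ∈ Outliers A k x := by
  rw [or_iff_not_imp_left]
  intro hT ⟨e, he, w⟩
  have wbT := hgeo.hasWalkLen_pred_of_distLe (by omega) hxa hx hTa hTx (not_not.1 hT)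
  rcases e with _ | e
  · obtain rfl := hasWalkLen_zero_iff.1 w
    exact hgeo.not_distLe_of_common_outNeighbour hTa hxa hTx
      ((hasWalkLen_one_iff.2 hTg).distLe (by omega))
  · obtain ⟨s, hxs, ws⟩ := hasWalkLen_succ_iff.1 w
    rcases hx hxs with rfl | rfl
    · exact hgeo.not_distLe_of_common_inNeighbour hTa hTg hag (ws.distLe (by omega))
    · have := hgeo.length_eq (by omega) (by omega) ws (wbT.snoc hTg)
      omega

theorem arc_of_distEq_two_eq (hgeo : Geodetic A k) (hk : 2 ≤ k) (hu₁ : A u u₁)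
    (hu₂ : A u u₂) (h12 : u₁ ≠ u₂) (hv : Nplus A v ⊆ {v₁, u₂})
    (hN2 : {w | DistEq A 2 u w} = {w | DistEq A 2 v w}) {e : V} (he : A u₁ e) : A v₁ e := by
  have hve : DistEq A 2 v e := (Set.ext_iff.1 hN2 e).1
    (hgeo.distEq_of_hasWalkLen hk ((hasWalkLen_one_iff.2 he).cons hu₁))
  obtain ⟨y, hvy, hye⟩ := hasWalkLen_succ_iff.1 hve.1
  rcases hv hvy with rfl | rfl
  · exact hasWalkLen_one_iff.1 hye
  · exact absurd (hgeo.eq_of_arc_of_hasWalkLen hk hu₁ hu₂ (hasWalkLen_one_iff.2 he) hye) h12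

theorem mem_outliers_of_forall_inNeighbour (hgeo : Geodetic A k) (hk : 1 ≤ k) (hyx : y ≠ x)
    (h : ∀ w, A w y → w ≠ x ∧ ∃ p, A p w ∧ A p x) : y ∈ Outliers A k x := by
  have := not_distLe_succ (n := k - 1) hyx fun w hw => by
    obtain ⟨hwx, p, hpw, hpx⟩ := h w hw
    exact hgeo.not_distLe_of_common_inNeighbour hpx hpw hwx.symm
  rwa [Nat.sub_add_cancel hk] at this

theorem outliers_ne_nplus (hgeo : Geodetic A k) (hk : 3 ≤ k) (hout : ∀ w, outDeg A w = 2)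
    (hin : ∀ w, inDeg A w = 2) (hu₁ : A u u₁) (hu₂ : A u u₂)
    (hclosed : ∀ y ∈ Nplus A u₁, ∀ w, A w y → Nplus A w = Nplus A u₁) :
    Outliers A k u₂ ≠ Nplus A u₁ := by
  intro hO
  obtain ⟨a, b, -, hab⟩ := Set.ncard_eq_two.1 (hout u₂)
  have hu₂a : A u₂ a := hab.symm.subset (Set.mem_insert a {b})
  obtain ⟨T, hTa, hTu₂⟩ :=
    Set.exists_ne_of_one_lt_ncard (lt_of_lt_of_eq one_lt_two (hin a).symm) u₂
  obtain ⟨g, hTg, hga⟩ :=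
    Set.exists_ne_of_one_lt_ncard (lt_of_lt_of_eq one_lt_two (hout T).symm) a
  rcases hgeo.mem_outliers_or_mem_outliers (by omega) hu₂a hab.subset hTa hTg hga.symm hTu₂
    with hT | hg
  · have := hgeo.length_eq (by omega) (by omega)
      (((hasWalkLen_one_iff.2 hTa).cons (hO.subset hT)).cons hu₁)
      ((hasWalkLen_one_iff.2 hu₂a).cons hu₂)
    omega
  · have ha : a ∈ Outliers A k u₂ :=
      hO.symm.subset ((hclosed g (hO.subset hg) T hTg).subset hTa)
    exact ha ((hasWalkLen_one_iff.2 hu₂a).distLe (by omega))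

end Geodetic

theorem stmt_17_general {V : Type*} [Fintype V] (A : V → V → Prop) (k : ℕ) (hk : 3 ≤ k)
    (hgeo : Geodetic A k)
    (hdeg : ∀ w, outDeg A w = 2 ∧ inDeg A w = 2)
    (hcard : Fintype.card V = 2 ^ (k + 1) + 1)
    (u v u₁ u₂ v₁ : V)
    (h12 : u₁ ≠ u₂) (hv2 : v₁ ≠ u₂) (h11 : u₁ ≠ v₁)
    (hu : Nplus A u = {u₁, u₂}) (hv : Nplus A v = {v₁, u₂}) :
    {w | DistEq A 2 u w} ≠ {w | DistEq A 2 v w} := by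
  intro hN2
  obtain ⟨hu₁, hu₂⟩ : A u u₁ ∧ A u u₂ := Set.pair_subset_iff.1 hu.symm.subset
  obtain ⟨hv₁, hv₂⟩ : A v v₁ ∧ A v u₂ := Set.pair_subset_iff.1 hv.symm.subset
  have hN₁ : Nplus A u₁ = Nplus A v₁ :=
    Set.eq_of_subset_of_ncard_le (fun _ => hgeo.arc_of_distEq_two_eq (by omega) hu₁ hu₂ h12
      hv.subset hN2) ((hdeg v₁).1.trans (hdeg u₁).1.symm).le
  have hinN {y : V} (hy : A u₁ y) : {w | A w y} = {u₁, v₁} :=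
    Set.eq_pair_of_ncard_eq_two (hdeg y).2 hy (hN₁.subset hy) h11
  refine hgeo.outliers_ne_nplus hk (fun w => (hdeg w).1) (fun w => (hdeg w).2) hu₁ hu₂
    (fun y hy w hw => ?_) (Set.eq_of_subset_of_ncard_le (fun y hy => ?_) ?_).symm
  · rcases (Set.ext_iff.1 (hinN hy) w).1 hw with rfl | rfl
    exacts [rfl, hN₁.symm]
  · refine hgeo.mem_outliers_of_forall_inNeighbour (by omega) ?_ fun w hw => ?_
    · rintro rfl
      exact hgeo.not_distLe_of_common_inNeighbour hu₁ hu₂ h12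
        ((hasWalkLen_one_iff.2 hy).distLe (by omega))
    · rcases (Set.ext_iff.1 (hinN hy) w).1 hw with rfl | rfl
      exacts [⟨h12, u, hu₁, hu₂⟩, ⟨hv2, v, hv₁, hv₂⟩]
  · exact (hgeo.ncard_outliers_le_two (fun w => (hdeg w).1) hcard u₂).trans_eq
      (hdeg u₁).1.symm

/-- In a diregular `(2,k,+2)`-digraph with `k ≥ 3` and `u, v` having unique
common out-neighbour `u₂`: `N²(u) ≠ N²(v)`. -/
theorem stmt_17 {V : Type*} [Fintype V] (A : V → V → Prop) (k : ℕ) (hk : 3 ≤ k)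
    (hgeo : Geodetic A k)
    (hdeg : ∀ w, outDeg A w = 2 ∧ inDeg A w = 2)
    (hcard : Fintype.card V = 2 ^ (k + 1) + 1)
    (u v u₁ u₂ v₁ : V) (huv : u ≠ v)
    (h12 : u₁ ≠ u₂) (hv2 : v₁ ≠ u₂) (h11 : u₁ ≠ v₁)
    (hu : Nplus A u = {u₁, u₂}) (hv : Nplus A v = {v₁, u₂}) :
    {w | DistEq A 2 u w} ≠ {w | DistEq A 2 v w} :=
  stmt_17_general A k hk hgeo hdeg hcard u v u₁ u₂ v₁ h12 hv2 h11 hu hv
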